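/- arXiv:2501.17999 — 3 statements merged into one kernel-verified Lean document; each statement's English description precedes it below -/
import Mathlib

section
/- Let Q₈ denote the quaternion group of order 8. For every natural number m ≥ 1, there is no injective group homomorphism from Q₈ into the semidirect product M_m = (ℤ/mℤ × ℤ/mℤ) ⋊ ℤ/2ℤ, where the nontrivial element of ℤ/2ℤ acts on ℤ/mℤ × ℤ/mℤ by negation (inversion) in both factors. -/
/-!
Every element of `M_m` outside the abelian normal subgroup `ℤ/mℤ × ℤ/mℤ` is an involution,
since `(n, t)² = (n · t(n), t²) = (n - n, 0)` when `t` acts by inversion. An embedded `Q₈` would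
therefore have all its elements of order `4` inside an abelian subgroup, but `i` and `j` have
order `4` and do not commute.
-/

noncomputable section

/-- The inversion (negation) automorphism of `ℤ/mℤ × ℤ/mℤ` (written multiplicatively). -/
def negAut (m : ℕ) : MulAut (Multiplicative (ZMod m × ZMod m)) :=
  MulEquiv.inv (Multiplicative (ZMod m × ZMod m))

/-- The action of `ℤ/2ℤ` on `ℤ/mℤ × ℤ/mℤ` in which the nontrivial element acts by
negation (inversion) in both factors. -/
def invAction (m : ℕ) : Multiplicative (ZMod 2) →* MulAut (Multiplicative (ZMod m × ZMod m)) :=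
  MonoidHom.mk' (fun a => if a.toAdd = 0 then 1 else negAut m) (by
    have hcases : ∀ x : ZMod 2, x = 0 ∨ x = 1 := by decide
    have h11 : (1 + 1 : ZMod 2) = 0 := by decide
    have h10 : (1 : ZMod 2) ≠ 0 := by decide
    have hsq : negAut m * negAut m = 1 := by
      refine MulEquiv.ext fun x => ?_
      show ((negAut m) ((negAut m) x)) = x
      simp [negAut]
    intro a b
    rcases hcases a.toAdd with ha | ha <;> rcases hcases b.toAdd with hb | hb <;>
      simp [toAdd_mul, ha, hb, h11, h10, hsq])

/-- The maximal finite handlebody group `M_m = (ℤ/mℤ × ℤ/mℤ) ⋊ ℤ/2ℤ`, where the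
nontrivial element of `ℤ/2ℤ` acts by negation in both factors. -/
abbrev MaxHandlebodyGroup (m : ℕ) : Type :=
  SemidirectProduct (Multiplicative (ZMod m × ZMod m)) (Multiplicative (ZMod 2)) (invAction m)

open Function

theorem mul_self_ne_one_of_not_orderOf_dvd_two {G : Type*} [Monoid G] {x : G}
    (hx : ¬ orderOf x ∣ 2) : x * x ≠ 1 :=
  fun h => hx (orderOf_dvd_of_pow_eq_one (by rwa [sq]))

theorem commute_of_injective_of_mul_self_eq_one_of_not_mem {G H : Type*} [Group G] [Group H]
    (A : Subgroup H) [IsMulCommutative A] (hA : ∀ h ∉ A, h * h = 1) {f : G →* H}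
    (hf : Injective f) {x y : G} (hx : x * x ≠ 1) (hy : y * y ≠ 1) : Commute x y := by
  have mem_A {z : G} (hz : z * z ≠ 1) : f z ∈ A := by
    by_contra hzA
    exact hz (hf (by rw [map_mul, hA _ hzA, map_one]))
  apply hf
  rw [map_mul, map_mul]
  exact setLike_mul_comm (mem_A hx) (mem_A hy)

namespace QuaternionGroup

variable {n : ℕ}

theorem a_one_mul_self_ne_one (hn : 2 ≤ n) : (a 1 : QuaternionGroup n) * a 1 ≠ 1 := by
  refine mul_self_ne_one_of_not_orderOf_dvd_two fun h => ?_
  rw [orderOf_a_one] at h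
  have := Nat.le_of_dvd two_pos h
  omega

theorem xa_mul_self_ne_one [NeZero n] (i : ZMod (2 * n)) : xa i * xa i ≠ 1 :=
  mul_self_ne_one_of_not_orderOf_dvd_two (by rw [orderOf_xa]; decide)

theorem not_commute_a_one_xa (hn : 2 ≤ n) (i : ZMod (2 * n)) :
    ¬ Commute (a 1 : QuaternionGroup n) (xa i) := by
  have : Fact (2 < 2 * n) := ⟨by omega⟩
  intro h
  have hxa := h.eq
  rw [a_mul_xa, xa_mul_a, xa.injEq] at hxa
  exact ZMod.neg_one_ne_one (by linear_combination hxa)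

theorem not_injective_of_mul_self_eq_one_of_not_mem (hn : 2 ≤ n) {H : Type*} [Group H]
    (A : Subgroup H) [IsMulCommutative A] (hA : ∀ h ∉ A, h * h = 1)
    (f : QuaternionGroup n →* H) : ¬ Injective f := by
  have : NeZero n := ⟨by omega⟩
  intro hf
  exact not_commute_a_one_xa hn 0 <| commute_of_injective_of_mul_self_eq_one_of_not_mem A hA hf
    (a_one_mul_self_ne_one hn) (xa_mul_self_ne_one 0)

end QuaternionGroup

theorem invAction_of_ne_one (m : ℕ) {t : Multiplicative (ZMod 2)} (ht : t ≠ 1) :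
    invAction m t = negAut m :=
  if_neg (by simpa using ht)

theorem MaxHandlebodyGroup.mul_self_eq_one {m : ℕ} {g : MaxHandlebodyGroup m}
    (hg : g.right ≠ 1) : g * g = 1 := by
  ext : 1
  · rw [SemidirectProduct.mul_left, invAction_of_ne_one m hg]
    exact mul_inv_cancel g.left
  · exact (by decide : ∀ t : Multiplicative (ZMod 2), t * t = 1) g.right

theorem quaternionGroup_no_embedding_maxHandlebodyGroup_general (m : ℕ)
    (f : QuaternionGroup 2 →* MaxHandlebodyGroup m) :
    ¬ Function.Injective f := by
  refine QuaternionGroup.not_injective_of_mul_self_eq_one_of_not_mem le_rfl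
    SemidirectProduct.inl.range (fun g hg => MaxHandlebodyGroup.mul_self_eq_one ?_) f
  rwa [SemidirectProduct.range_inl_eq_ker_rightHom, MonoidHom.mem_ker] at hg

/-- For every `m ≥ 1`, there is no injective group homomorphism from the quaternion group
`Q₈` of order `8` into the maximal finite handlebody group
`M_m = (ℤ/mℤ × ℤ/mℤ) ⋊ ℤ/2ℤ` (with `ℤ/2ℤ` acting by inversion in both factors). -/
theorem quaternionGroup_no_embedding_maxHandlebodyGroup (m : ℕ) (hm : 1 ≤ m)
    (f : QuaternionGroup 2 →* MaxHandlebodyGroup m) :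
    ¬ Function.Injective f :=
  quaternionGroup_no_embedding_maxHandlebodyGroup_general m f

end
end

section
/- Let ρ : Q₈ → O(4) be an injective group homomorphism from the quaternion group of order 8 into the orthogonal group of ℝ⁴. Then the resulting linear action of Q₈ on ℝ⁴ is free away from the origin: for every g ∈ Q₈ with g ≠ 1 and every x ∈ ℝ⁴ with x ≠ 0, one has ρ(g)x ≠ x. In particular, the induced action of Q₈ on the unit sphere S³ ⊂ ℝ⁴ is free. -/
/-!
The element `a 2` is the central involution `-1` of `Q₈`, and every `g ≠ 1` has a power equal
to it, so it suffices that `ρ (a 2)` acts as `-1`. Its `(-1)`-eigenspace `W` is stable under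
`ρ (a 1)` and `ρ (xa 0)`, which restrict to anticommuting complex structures on `W`; hence `W` is
a module over the quaternions `ℍ` and `4 ∣ dim W`. Injectivity rules out `W = 0`, so `W = ℝ⁴`.
-/

open Module Quaternion QuaternionGroup

theorem four_dvd_finrank_of_anticommute {W : Type*} [AddCommGroup W] [Module ℝ W]
    (J K : Module.End ℝ W) (hJ : J * J = -1) (hK : K * K = -1) (hJK : K * J = -(J * K)) :
    4 ∣ finrank ℝ W := by
  let φ : ℍ[ℝ] →ₐ[ℝ] Module.End ℝ W := QuaternionAlgebra.lift
    { i := J, j := K, k := J * K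
      i_mul_i := by simp [hJ]
      j_mul_j := by simp [hK]
      i_mul_j := rfl
      j_mul_i := by simp [hJK] }
  let _ : Module ℍ[ℝ] W := Module.compHom W φ.toRingHom
  have _ : IsScalarTower ℝ ℍ[ℝ] W := ⟨fun r q w => by
    show φ (r • q) w = r • φ q w
    rw [map_smul]
    rfl⟩
  rw [← Module.finrank_mul_finrank ℝ ℍ[ℝ] W, Quaternion.finrank_eq_four]
  exact dvd_mul_right _ _

theorem eq_neg_one_of_quaternion_relations {E : Type*} [AddCommGroup E] [Module ℝ E]
    (hE : finrank ℝ E = 4) {a b c : Module.End ℝ E} (ha : a * a = c) (hb : b * b = c)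
    (hab : a * b = c * (b * a)) (hc : c * c = 1) (hc1 : c ≠ 1) : c = -1 := by
  have := Module.finite_of_finrank_eq_succ hE
  set W := c.eigenspace (-1)
  have hmem : ∀ x, x ∈ W ↔ c x = -x := fun x => by
    rw [Module.End.mem_eigenspace_iff, neg_one_smul]
  have mapsTo {f : Module.End ℝ E} (hf : f * f = c) : ∀ w ∈ W, f w ∈ W := fun w hw => by
    rw [hmem, ← hf] at hw ⊢
    rw [Module.End.mul_apply] at hw ⊢
    rw [hw, map_neg]
  have hW2 {f : Module.End ℝ E} (hf : f * f = c) :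
      f.restrict (mapsTo hf) * f.restrict (mapsTo hf) = -1 := by
    ext ⟨w, hw⟩
    change (f * f) w = -w
    rw [hf, ← hmem]
    exact hw
  have hanti : b.restrict (mapsTo hb) * a.restrict (mapsTo ha) =
      -(a.restrict (mapsTo ha) * b.restrict (mapsTo hb)) := by
    ext ⟨w, hw⟩
    change b (a w) = -((a * b) w)
    rw [hab, Module.End.mul_apply, Module.End.mul_apply,
      (hmem _).1 (mapsTo hb _ (mapsTo ha w hw)), neg_neg]
  have hdvd := four_dvd_finrank_of_anticommute _ _ (hW2 ha) (hW2 hb) hanti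
  have hle := hE ▸ Submodule.finrank_le W
  obtain h0 | h4 : finrank ℝ W = 0 ∨ finrank ℝ W = 4 := by omega
  · refine absurd (LinearMap.ext fun x => ?_) hc1
    have : c x - x ∈ W := by
      rw [hmem, map_sub, ← Module.End.mul_apply, hc]
      simp
    rw [Submodule.finrank_eq_zero.1 h0, Submodule.mem_bot, sub_eq_zero] at this
    exact this
  · have hW : W = ⊤ := Submodule.eq_top_of_finrank_eq (h4.trans hE.symm)
    exact LinearMap.ext fun x => (hmem x).1 (hW ▸ Submodule.mem_top)

theorem QuaternionGroup.exists_pow_eq_a_two {g : QuaternionGroup 2} (hg : g ≠ 1) :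
    ∃ n : ℕ, g ^ n = a 2 := by
  obtain h | h : g = a 2 ∨ g ^ 2 = a 2 := by revert g; decide
  exacts [⟨1, by rw [pow_one, h]⟩, ⟨2, h⟩]

theorem eq_zero_of_map_pow_eq_neg_one {M R E : Type*} [Monoid M] [Ring R] [AddCommGroup E]
    [Module R E] [IsAddTorsionFree E] (ρ : M →* Module.End R E) {g : M} {n : ℕ}
    (hg : ρ (g ^ n) = -1) {x : E} (hx : ρ g x = x) : x = 0 := by
  have h : ρ (g ^ n) x = x := by
    rw [map_pow, Module.End.pow_apply]
    exact Function.iterate_fixed hx n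
  rwa [hg, LinearMap.neg_apply, Module.End.one_apply, neg_eq_self] at h

theorem QuaternionGroup.map_a_two_eq_neg_one {E : Type*} [AddCommGroup E] [Module ℝ E]
    (hE : finrank ℝ E = 4) (ρ : QuaternionGroup 2 →* Module.End ℝ E) (hρ : ρ (a 2) ≠ 1) :
    ρ (a 2) = -1 := by
  refine eq_neg_one_of_quaternion_relations hE (a := ρ (a 1)) (b := ρ (xa 0)) ?_ ?_ ?_ ?_ hρ
  all_goals simp only [← map_mul, ← map_one ρ]
  all_goals exact congrArg ρ (by decide)

/-- Every faithful linear orthogonal action of the quaternion group `Q₈` on `ℝ⁴` is free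
away from the origin: if `ρ : Q₈ → O(4)` is an injective homomorphism, then for every
`g ≠ 1` and every `x ≠ 0` one has `ρ(g) x ≠ x`. In particular, the induced action of `Q₈`
on the unit sphere `S³ ⊂ ℝ⁴` is free. -/
theorem quaternionGroup_orthogonal_action_free
    (ρ : QuaternionGroup 2 →* Matrix.orthogonalGroup (Fin 4) ℝ)
    (hρ : Function.Injective ρ) :
    (∀ g : QuaternionGroup 2, g ≠ 1 → ∀ x : Fin 4 → ℝ, x ≠ 0 →
      (ρ g : Matrix (Fin 4) (Fin 4) ℝ).mulVec x ≠ x) ∧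
    (∀ g : QuaternionGroup 2, g ≠ 1 →
      ∀ x : Metric.sphere (0 : EuclideanSpace ℝ (Fin 4)) 1,
        Matrix.toEuclideanLin (ρ g : Matrix (Fin 4) (Fin 4) ℝ)
          (x : EuclideanSpace ℝ (Fin 4)) ≠ (x : EuclideanSpace ℝ (Fin 4))) := by
  let σ : QuaternionGroup 2 →* Module.End ℝ (Fin 4 → ℝ) :=
    (Matrix.toLinAlgEquiv' : Matrix (Fin 4) (Fin 4) ℝ ≃ₐ[ℝ] _).toMonoidHom.comp
      ((Matrix.orthogonalGroup (Fin 4) ℝ).subtype.comp ρ)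
  have hσ : σ (a 2) = -1 := by
    have hσ_inj : Function.Injective σ :=
      Matrix.toLinAlgEquiv'.injective.comp (Subtype.val_injective.comp hρ)
    refine map_a_two_eq_neg_one (by simp) σ fun h => ?_
    exact absurd (hσ_inj (h.trans (map_one σ).symm)) (by decide)
  have free {g : QuaternionGroup 2} (hg : g ≠ 1) {x : Fin 4 → ℝ}
      (hx : (ρ g : Matrix (Fin 4) (Fin 4) ℝ).mulVec x = x) : x = 0 := by
    obtain ⟨n, hn⟩ := exists_pow_eq_a_two hg
    exact eq_zero_of_map_pow_eq_neg_one σ (hn ▸ hσ) hx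
  refine ⟨fun g hg x hx0 hx => hx0 (free hg hx), fun g hg x hx => ?_⟩
  rw [Matrix.toLpLin_apply] at hx
  exact ne_zero_of_mem_unit_sphere x
    (congrArg (WithLp.toLp 2) (free hg (congrArg WithLp.ofLp hx)))
end

section
/- Let S² be the unit sphere in ℝ³. The orbit space of S² × S² by the involution ρ(x, y) = (y, x) exchanging the two factors, equipped with the quotient topology, is homeomorphic to the complex projective plane ℂP². -/
noncomputable section

/-- The setoid on nonzero vectors of `ℂ³` whose quotient is the complex projective plane. -/
def projSetoid3 : Setoid {v : Fin 3 → ℂ // v ≠ 0} where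
  r v w := ∃ c : ℂ, c ≠ 0 ∧ (w : Fin 3 → ℂ) = c • (v : Fin 3 → ℂ)
  iseqv := by
    refine ⟨fun v => ⟨1, one_ne_zero, (one_smul _ _).symm⟩, ?_, ?_⟩
    · rintro v w ⟨c, hc, h⟩
      exact ⟨c⁻¹, inv_ne_zero hc, by rw [h, smul_smul, inv_mul_cancel₀ hc, one_smul]⟩
    · rintro u v w ⟨c, hc, h⟩ ⟨d, hd, h'⟩
      exact ⟨d * c, mul_ne_zero hd hc, by rw [h', h, smul_smul]⟩

/-- The complex projective plane `ℂP²` with its quotient topology. -/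
abbrev CP2 : Type := Quotient projSetoid3

/-- The unit 2-sphere in `ℝ³`. -/
abbrev TwoSphere := Metric.sphere (0 : EuclideanSpace ℝ (Fin 3)) 1

/-!
The Hopf map `hopf : ℂ² ∖ 0 → S²` identifies `S²` with `ℂP¹`. Send a pair `(p, q)` of points of
`S²` to the product of linear forms vanishing at `p` and `q`: its coefficients give a point of `ℂP²`
(the binary quadratic forms up to scale), and the map is symmetric in `p` and `q`. Binary forms
factor uniquely, so the induced map on the orbit space of the swap is injective. It is surjective
because every binary quadratic form over `ℂ` splits. It is continuous because the chosen homogeneous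
coordinates are, near each point, a nonzero multiple of a continuous section of `hopf`. So it is a
continuous bijection from a compact space to `ℂP²`. `ℂP²` is Hausdorff because it embeds in
matrices via `[v] ↦ v v* / |v|²`, hence the map is a homeomorphism.
-/

open Complex ComplexConjugate Matrix Metric Topology
open scoped ComplexOrder

section BinaryForms

variable {K : Type*} [Field K]

def formMul (u v : K × K) : Fin 3 → K := ![u.1 * v.1, u.1 * v.2 + u.2 * v.1, u.2 * v.2]

def wedge (u v : K × K) : K := u.1 * v.2 - u.2 * v.1

lemma formMul_comm (u v : K × K) : formMul u v = formMul v u := by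
  simp only [formMul, mul_comm, add_comm]

lemma formMul_smul_smul (c d : K) (u v : K × K) :
    formMul (c • u) (d • v) = (c * d) • formMul u v := by
  simp only [formMul, Prod.smul_fst, Prod.smul_snd, smul_eq_mul, smul_cons, smul_empty]
  ring_nf

lemma formMul_ne_zero {u v : K × K} (hu : u ≠ 0) (hv : v ≠ 0) : formMul u v ≠ 0 := by
  obtain ⟨a, b⟩ := u
  obtain ⟨c, d⟩ := v
  intro h
  have h0 : a * c = 0 := congrFun h 0
  have h1 : a * d + b * c = 0 := congrFun h 1
  have h2 : b * d = 0 := congrFun h 2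
  simp only [ne_eq, Prod.mk_eq_zero, not_and_or] at hu hv
  grind

lemma exists_smul_eq_of_wedge_eq_zero {u v : K × K} (hu : u ≠ 0) (hv : v ≠ 0)
    (h : wedge u v = 0) : ∃ c : K, c ≠ 0 ∧ v = c • u := by
  suffices ∃ c : K, v = c • u by
    obtain ⟨c, rfl⟩ := this
    exact ⟨c, left_ne_zero_of_smul hv, rfl⟩
  obtain ⟨a, b⟩ := u
  obtain ⟨c, d⟩ := v
  simp only [wedge] at h
  rcases eq_or_ne a 0 with rfl | ha
  · have hb : b ≠ 0 := by simpa using hu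
    exact ⟨d / b, Prod.ext (by simp only [Prod.smul_mk, smul_eq_mul, mul_zero]; grind)
      (by simp [hb])⟩
  · exact ⟨c / a, Prod.ext (by simp [ha]) (by
      simp only [Prod.smul_mk, smul_eq_mul]; field_simp; linear_combination h)⟩

/-- Evaluating both sides at the zero `(w.2, -w.1)` of a linear factor `w` of one side shows that
a linear factor of the other side is proportional to `w`. -/
lemma wedge_eq_zero_of_formMul_eq_smul {u v u' v' : K × K} {c : K} (hc : c ≠ 0)
    (h : formMul u v = c • formMul u' v') :
    (wedge u u' = 0 ∧ wedge v v' = 0) ∨ (wedge u v' = 0 ∧ wedge v u' = 0) := by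
  have h0 : u.1 * v.1 = c * (u'.1 * v'.1) := congrFun h 0
  have h1 : u.1 * v.2 + u.2 * v.1 = c * (u'.1 * v'.2 + u'.2 * v'.1) := congrFun h 1
  have h2 : u.2 * v.2 = c * (u'.2 * v'.2) := congrFun h 2
  have eval : ∀ p q : K, (u.1 * p + u.2 * q) * (v.1 * p + v.2 * q)
      = c * ((u'.1 * p + u'.2 * q) * (v'.1 * p + v'.2 * q)) := fun p q => by
    linear_combination p ^ 2 * h0 + p * q * h1 + q ^ 2 * h2
  have at_u' : wedge u u' * wedge v u' = 0 := by
    simp only [wedge]; linear_combination eval u'.2 (-u'.1)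
  have at_v' : wedge u v' * wedge v v' = 0 := by
    simp only [wedge]; linear_combination eval v'.2 (-v'.1)
  have at_u : c * (wedge u u' * wedge u v') = 0 := by
    simp only [wedge]; linear_combination -eval u.2 (-u.1)
  have at_v : c * (wedge v u' * wedge v v') = 0 := by
    simp only [wedge]; linear_combination -eval v.2 (-v.1)
  simp only [mul_eq_zero, hc, false_or] at at_u' at_v' at_u at_v
  tauto

lemma continuous_formMul [TopologicalSpace K] [IsTopologicalRing K] :
    Continuous fun x : (K × K) × (K × K) => formMul x.1 x.2 := by
  unfold formMul; fun_prop

lemma exists_formMul_eq [IsAlgClosed K] {w : Fin 3 → K} (hw : w ≠ 0) :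
    ∃ u v : K × K, u ≠ 0 ∧ v ≠ 0 ∧ formMul u v = w := by
  rcases eq_or_ne (w 0) 0 with h0 | h0
  · refine ⟨(0, 1), (w 1, w 2), by simp, ?_, ?_⟩
    · rintro h
      simp only [Prod.mk_eq_zero] at h
      exact hw (by ext i; fin_cases i <;> simp [h0, h.1, h.2])
    · ext i; fin_cases i <;> simp [formMul, h0]
  · open Polynomial in
    obtain ⟨r, hr⟩ := IsAlgClosed.exists_root (C (w 0) * X ^ 2 + C (w 1) * X + C (w 2))
      (by rw [degree_quadratic h0]; decide)
    simp only [IsRoot, eval_add, eval_mul, eval_C, eval_pow, eval_X] at hr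
    refine ⟨(1, -r), (w 0, w 1 + w 0 * r), by simp, by simp [h0], ?_⟩
    ext i; fin_cases i
    · exact one_mul _
    · show 1 * (w 1 + w 0 * r) + -r * w 0 = w 1; ring
    · show -r * (w 1 + w 0 * r) = w 2; linear_combination -hr

end BinaryForms

section RankOneProjection

variable {𝕜 n : Type*} [RCLike 𝕜] [Fintype n]

def rankOneProj (v : n → 𝕜) : Matrix n n 𝕜 := (star v ⬝ᵥ v)⁻¹ • vecMulVec v (star v)

lemma rankOneProj_mulVec (v w : n → 𝕜) :
    rankOneProj v *ᵥ w = ((star v ⬝ᵥ v)⁻¹ * (star v ⬝ᵥ w)) • v := by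
  rw [rankOneProj, smul_mulVec, vecMulVec_mulVec, op_smul_eq_smul, smul_smul]

lemma rankOneProj_mulVec_self {v : n → 𝕜} (hv : v ≠ 0) : rankOneProj v *ᵥ v = v := by
  rw [rankOneProj_mulVec, inv_mul_cancel₀ (dotProduct_star_self_eq_zero.not.2 hv), one_smul]

lemma rankOneProj_smul {c : 𝕜} (hc : c ≠ 0) (v : n → 𝕜) :
    rankOneProj (c • v) = rankOneProj v := by
  have hc' : star c ≠ 0 := star_ne_zero.2 hc
  simp only [rankOneProj, star_smul, smul_dotProduct, dotProduct_smul, smul_vecMulVec,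
    vecMulVec_smul, smul_smul, smul_eq_mul]
  rcases eq_or_ne (star v ⬝ᵥ v) 0 with hv | hv
  · simp [hv]
  · congr 1
    field_simp

lemma exists_smul_eq_of_rankOneProj_eq {v w : n → 𝕜} (hv : v ≠ 0)
    (h : rankOneProj v = rankOneProj w) : ∃ c : 𝕜, v = c • w :=
  ⟨_, by rw [← rankOneProj_mulVec_self hv, h, rankOneProj_mulVec]⟩

lemma continuousOn_rankOneProj : ContinuousOn (rankOneProj (𝕜 := 𝕜) (n := n)) {v | v ≠ 0} := by
  intro v hv
  refine ContinuousAt.continuousWithinAt ?_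
  have hdot : Continuous fun v : n → 𝕜 => star v ⬝ᵥ v := by fun_prop
  exact (hdot.continuousAt.inv₀ (dotProduct_star_self_eq_zero.not.2 hv)).smul (by fun_prop)

end RankOneProjection

def CP2.toMatrix : CP2 → Matrix (Fin 3) (Fin 3) ℂ :=
  Quotient.lift (fun v => rankOneProj v.1) fun _ _ ⟨_, hc, h⟩ => by rw [h, rankOneProj_smul hc]

lemma CP2.toMatrix_injective : Function.Injective CP2.toMatrix := by
  rintro ⟨v, hv⟩ ⟨w, _⟩ h
  obtain ⟨c, rfl⟩ := exists_smul_eq_of_rankOneProj_eq hv h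
  have hc : c ≠ 0 := left_ne_zero_of_smul hv
  exact Quotient.sound ⟨c⁻¹, inv_ne_zero hc, by simp [smul_smul, hc]⟩

lemma CP2.continuous_toMatrix : Continuous CP2.toMatrix :=
  continuous_quot_lift _ (continuousOn_iff_continuous_domRestrict.1 continuousOn_rankOneProj)

instance : T2Space CP2 := .of_injective_continuous CP2.toMatrix_injective CP2.continuous_toMatrix

local notation "ℝ³" => EuclideanSpace ℝ (Fin 3)

lemma ext_coords {p q : ℝ³} (h0 : p 0 = q 0) (h1 : p 1 = q 1) (h2 : p 2 = q 2) : p = q := by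
  ext i; fin_cases i <;> assumption

lemma mem_sphere_iff_sq_add_sq_add_sq {p : ℝ³} :
    p ∈ sphere (0 : ℝ³) 1 ↔ p 0 ^ 2 + p 1 ^ 2 + p 2 ^ 2 = 1 := by
  rw [mem_sphere_zero_iff_norm, EuclideanSpace.norm_eq, Real.sqrt_eq_one, Fin.sum_univ_three]
  simp only [Real.norm_eq_abs, sq_abs]

lemma coords_eq_zero_of_two_eq_one {p : ℝ³} (hp : p ∈ sphere (0 : ℝ³) 1) (h : p 2 = 1) :
    p 0 = 0 ∧ p 1 = 0 := by
  rw [mem_sphere_iff_sq_add_sq_add_sq, h] at hp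
  constructor <;> nlinarith

def hopf (u : ℂ × ℂ) : ℝ³ :=
  !₂[2 * (u.1 * conj u.2).re / (normSq u.1 + normSq u.2),
    2 * (u.1 * conj u.2).im / (normSq u.1 + normSq u.2),
    (normSq u.1 - normSq u.2) / (normSq u.1 + normSq u.2)]

lemma hopf_zero (u : ℂ × ℂ) :
    hopf u 0 = 2 * (u.1 * conj u.2).re / (normSq u.1 + normSq u.2) := rfl

lemma hopf_one (u : ℂ × ℂ) :
    hopf u 1 = 2 * (u.1 * conj u.2).im / (normSq u.1 + normSq u.2) := rfl

lemma hopf_two (u : ℂ × ℂ) :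
    hopf u 2 = (normSq u.1 - normSq u.2) / (normSq u.1 + normSq u.2) := rfl

lemma normSq_add_normSq_pos {u : ℂ × ℂ} (hu : u ≠ 0) : 0 < normSq u.1 + normSq u.2 := by
  obtain ⟨a, b⟩ := u
  rcases eq_or_ne a 0 with rfl | ha
  · simpa using hu
  · exact add_pos_of_pos_of_nonneg (normSq_pos.2 ha) (normSq_nonneg b)

lemma hopf_mem_sphere {u : ℂ × ℂ} (hu : u ≠ 0) : hopf u ∈ sphere (0 : ℝ³) 1 := by
  have hN := (normSq_add_normSq_pos hu).ne'
  rw [mem_sphere_iff_sq_add_sq_add_sq, hopf_zero, hopf_one, hopf_two]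
  field_simp
  simp only [normSq_apply, mul_re, mul_im, conj_re, conj_im]
  ring

lemma hopf_smul {c : ℂ} (hc : c ≠ 0) (u : ℂ × ℂ) : hopf (c • u) = hopf u := by
  have hc' := (normSq_pos.2 hc).ne'
  have hprod : (c • u).1 * conj (c • u).2 = normSq c * (u.1 * conj u.2) := by
    rw [Prod.smul_fst, Prod.smul_snd, smul_eq_mul, smul_eq_mul, map_mul, ← mul_conj]; ring
  have hnormSq : ∀ z, normSq (c • z) = normSq c * normSq z := normSq_mul c
  apply ext_coords
  · rw [hopf_zero, hopf_zero, hprod, re_ofReal_mul, Prod.smul_fst, Prod.smul_snd, hnormSq,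
      hnormSq]
    field_simp
  · rw [hopf_one, hopf_one, hprod, im_ofReal_mul, Prod.smul_fst, Prod.smul_snd, hnormSq,
      hnormSq]
    field_simp
  · rw [hopf_two, hopf_two, Prod.smul_fst, Prod.smul_snd, hnormSq, hnormSq]
    field_simp

lemma hopf_two_eq_one_iff {u : ℂ × ℂ} (hu : u ≠ 0) : hopf u 2 = 1 ↔ u.2 = 0 := by
  rw [hopf_two, div_eq_one_iff_eq (normSq_add_normSq_pos hu).ne', ← normSq_eq_zero]
  constructor <;> intro h <;> linarith

-- Homogeneous form of the stereographic coordinate `(x + i y) / (1 - z)`.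
def hopfLiftOffNorth (p : ℝ³) : ℂ × ℂ := (p 0 + p 1 * I, 1 - p 2)

def hopfLiftOffSouth (p : ℝ³) : ℂ × ℂ := (1 + p 2, p 0 - p 1 * I)

-- Homogeneous coordinates of `p` in `ℂP¹ ≅ S²`; discontinuous at the north pole.
def hopfLift (p : ℝ³) : ℂ × ℂ := if p 2 = 1 then (1, 0) else hopfLiftOffNorth p

lemma hopfLiftOffNorth_ne_zero {p : ℝ³} (h : p 2 ≠ 1) : hopfLiftOffNorth p ≠ 0 := by
  intro h0
  have := congrArg (re ∘ Prod.snd) h0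
  simp only [hopfLiftOffNorth, Function.comp_apply, sub_re, one_re, ofReal_re, Prod.snd_zero,
    zero_re] at this
  exact h (by linarith)

lemma hopfLiftOffSouth_ne_zero {p : ℝ³} (h : p 2 ≠ -1) : hopfLiftOffSouth p ≠ 0 := by
  intro h0
  have := congrArg (re ∘ Prod.fst) h0
  simp only [hopfLiftOffSouth, Function.comp_apply, add_re, one_re, ofReal_re, Prod.fst_zero,
    zero_re] at this
  exact h (by linarith)

lemma hopfLift_ne_zero (p : ℝ³) : hopfLift p ≠ 0 := by
  unfold hopfLift
  split_ifs with h
  · simp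
  · exact hopfLiftOffNorth_ne_zero h

lemma hopf_hopfLiftOffNorth {p : ℝ³} (hp : p ∈ sphere (0 : ℝ³) 1) (h : p 2 ≠ 1) :
    hopf (hopfLiftOffNorth p) = p := by
  rw [mem_sphere_iff_sq_add_sq_add_sq] at hp
  have h1 : 1 - p 2 ≠ 0 := sub_ne_zero.2 h.symm
  have hprod : (hopfLiftOffNorth p).1 * conj (hopfLiftOffNorth p).2
      = ((1 - p 2 : ℝ) : ℂ) * (p 0 + p 1 * I) := by
    simp only [hopfLiftOffNorth, map_sub, map_one, conj_ofReal]; push_cast; ring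
  have hA : normSq (hopfLiftOffNorth p).1 = 1 - p 2 ^ 2 := by
    rw [hopfLiftOffNorth, normSq_add_mul_I]; linear_combination hp
  have hB : normSq (hopfLiftOffNorth p).2 = (1 - p 2) ^ 2 := by
    rw [hopfLiftOffNorth, ← ofReal_one, ← ofReal_sub, normSq_ofReal, sq]
  have hN : normSq (hopfLiftOffNorth p).1 + normSq (hopfLiftOffNorth p).2 = 2 * (1 - p 2) := by
    rw [hA, hB]; ring
  apply ext_coords
  · rw [hopf_zero, hprod, re_ofReal_mul, hN]
    simp only [add_re, ofReal_re, mul_I_re, ofReal_im, neg_zero, add_zero]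
    field_simp
  · rw [hopf_one, hprod, im_ofReal_mul, hN]
    simp only [add_im, ofReal_im, mul_I_im, ofReal_re, zero_add]
    field_simp
  · rw [hopf_two, hN, hA, hB]; field_simp; ring

lemma hopf_hopfLift {p : ℝ³} (hp : p ∈ sphere (0 : ℝ³) 1) : hopf (hopfLift p) = p := by
  unfold hopfLift
  split_ifs with h
  · obtain ⟨h0, h1⟩ := coords_eq_zero_of_two_eq_one hp h
    apply ext_coords <;> simp [hopf_zero, hopf_one, hopf_two, h, h0, h1]
  · exact hopf_hopfLiftOffNorth hp h

lemma hopfLiftOffNorth_hopf {u : ℂ × ℂ} (hu : u ≠ 0) :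
    hopfLiftOffNorth (hopf u) = (2 / (normSq u.1 + normSq u.2 : ℝ) * conj u.2) • u := by
  have hN : ((normSq u.1 + normSq u.2 : ℝ) : ℂ) ≠ 0 := mod_cast (normSq_add_normSq_pos hu).ne'
  ext
  · rw [hopfLiftOffNorth, hopf_zero, hopf_one, Prod.smul_fst, smul_eq_mul, mul_div_right_comm,
      mul_div_right_comm _ (u.1 * conj u.2).im, ofReal_mul, ofReal_mul, mul_assoc, ← mul_add,
      re_add_im]
    push_cast
    ring
  · rw [hopfLiftOffNorth, hopf_two, Prod.smul_snd, smul_eq_mul, mul_assoc,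
      ← normSq_eq_conj_mul_self]
    push_cast at hN ⊢
    field_simp
    ring

lemma exists_hopfLift_hopf_eq_smul {u : ℂ × ℂ} (hu : u ≠ 0) :
    ∃ c : ℂ, hopfLift (hopf u) = c • u := by
  unfold hopfLift
  split_ifs with h
  · have hb : u.2 = 0 := (hopf_two_eq_one_iff hu).1 h
    have ha : u.1 ≠ 0 := fun ha => hu (Prod.ext ha hb)
    exact ⟨u.1⁻¹, Prod.ext (by simp [ha]) (by simp [hb])⟩
  · exact ⟨_, hopfLiftOffNorth_hopf hu⟩

lemma wedge_hopfLiftOffSouth_hopfLiftOffNorth {p : ℝ³} (hp : p ∈ sphere (0 : ℝ³) 1) :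
    wedge (hopfLiftOffSouth p) (hopfLiftOffNorth p) = 0 := by
  rw [mem_sphere_iff_sq_add_sq_add_sq] at hp
  have hpC := congrArg ((↑) : ℝ → ℂ) hp
  push_cast at hpC
  simp only [wedge, hopfLiftOffNorth, hopfLiftOffSouth]
  linear_combination -hpC + (p 1 : ℂ) ^ 2 * I_sq

lemma exists_hopfLift_eq_smul_hopfLiftOffSouth {p : ℝ³} (hp : p ∈ sphere (0 : ℝ³) 1)
    (h : p 2 ≠ -1) : ∃ c : ℂ, hopfLift p = c • hopfLiftOffSouth p := by
  unfold hopfLift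
  split_ifs with hN
  · obtain ⟨h0, h1⟩ := coords_eq_zero_of_two_eq_one hp hN
    exact ⟨2⁻¹, Prod.ext (by simp [hopfLiftOffSouth, hN]; norm_num)
      (by simp [hopfLiftOffSouth, h0, h1])⟩
  · obtain ⟨c, -, hc⟩ := exists_smul_eq_of_wedge_eq_zero (hopfLiftOffSouth_ne_zero h)
      (hopfLiftOffNorth_ne_zero hN) (wedge_hopfLiftOffSouth_hopfLiftOffNorth hp)
    exact ⟨c, hc⟩

lemma exists_continuous_local_hopfLift (p₀ : ℝ³) :
    ∃ s : ℝ³ → ℂ × ℂ, Continuous s ∧ ∀ᶠ p in 𝓝 p₀,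
      s p ≠ 0 ∧ (p ∈ sphere (0 : ℝ³) 1 → ∃ c : ℂ, hopfLift p = c • s p) := by
  have h2 : Continuous fun p : ℝ³ => p 2 := by fun_prop
  by_cases h : p₀ 2 = 1
  · refine ⟨hopfLiftOffSouth, by unfold hopfLiftOffSouth; fun_prop, ?_⟩
    filter_upwards [h2.continuousAt.eventually_ne (show p₀ 2 ≠ -1 by rw [h]; norm_num)] with p hp
    exact ⟨hopfLiftOffSouth_ne_zero hp, fun hs => exists_hopfLift_eq_smul_hopfLiftOffSouth hs hp⟩
  · refine ⟨hopfLiftOffNorth, by unfold hopfLiftOffNorth; fun_prop, ?_⟩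
    filter_upwards [h2.continuousAt.eventually_ne h] with p hp
    exact ⟨hopfLiftOffNorth_ne_zero hp, fun _ => ⟨1, by simp [hopfLift, hp]⟩⟩

def prodToCP2 (p q : ℝ³) : CP2 :=
  Quotient.mk projSetoid3
    ⟨formMul (hopfLift p) (hopfLift q), formMul_ne_zero (hopfLift_ne_zero p) (hopfLift_ne_zero q)⟩

lemma prodToCP2_comm (p q : ℝ³) : prodToCP2 p q = prodToCP2 q p :=
  Quotient.sound ⟨1, one_ne_zero, by rw [one_smul]; exact formMul_comm _ _⟩

lemma prodToCP2_eq_mk_formMul {p q : ℝ³} {u v : ℂ × ℂ} (hu : u ≠ 0) (hv : v ≠ 0) {c d : ℂ}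
    (hp : hopfLift p = c • u) (hq : hopfLift q = d • v) :
    prodToCP2 p q = Quotient.mk projSetoid3 ⟨formMul u v, formMul_ne_zero hu hv⟩ := by
  have hc : c ≠ 0 := left_ne_zero_of_smul (hp ▸ hopfLift_ne_zero p)
  have hd : d ≠ 0 := left_ne_zero_of_smul (hq ▸ hopfLift_ne_zero q)
  exact Quotient.sound (projSetoid3.iseqv.symm
    ⟨c * d, mul_ne_zero hc hd, by simp only [hp, hq, formMul_smul_smul]⟩)

lemma eq_of_wedge_hopfLift_eq_zero {p q : ℝ³} (hp : p ∈ sphere (0 : ℝ³) 1)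
    (hq : q ∈ sphere (0 : ℝ³) 1) (h : wedge (hopfLift p) (hopfLift q) = 0) : p = q := by
  obtain ⟨c, hc, hqp⟩ :=
    exists_smul_eq_of_wedge_eq_zero (hopfLift_ne_zero p) (hopfLift_ne_zero q) h
  rw [← hopf_hopfLift hp, ← hopf_hopfLift hq, hqp, hopf_smul hc]

lemma eq_or_eq_swap_of_prodToCP2_eq {p q p' q' : ℝ³} (hp : p ∈ sphere (0 : ℝ³) 1)
    (hq : q ∈ sphere (0 : ℝ³) 1) (hp' : p' ∈ sphere (0 : ℝ³) 1) (hq' : q' ∈ sphere (0 : ℝ³) 1)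
    (h : prodToCP2 p q = prodToCP2 p' q') : (p = p' ∧ q = q') ∨ (p = q' ∧ q = p') := by
  obtain ⟨c, hc, hcs⟩ := Quotient.exact h
  rcases wedge_eq_zero_of_formMul_eq_smul hc hcs with ⟨h₁, h₂⟩ | ⟨h₁, h₂⟩
  · exact .inl ⟨(eq_of_wedge_hopfLift_eq_zero hp' hp h₁).symm,
      (eq_of_wedge_hopfLift_eq_zero hq' hq h₂).symm⟩
  · exact .inr ⟨(eq_of_wedge_hopfLift_eq_zero hq' hp h₂).symm,
      (eq_of_wedge_hopfLift_eq_zero hp' hq h₁).symm⟩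

lemma exists_prodToCP2_eq (x : CP2) :
    ∃ p q : ℝ³, p ∈ sphere (0 : ℝ³) 1 ∧ q ∈ sphere (0 : ℝ³) 1 ∧ prodToCP2 p q = x := by
  obtain ⟨⟨w, hw⟩⟩ := x
  obtain ⟨u, v, hu, hv, rfl⟩ := exists_formMul_eq hw
  obtain ⟨c, hc⟩ := exists_hopfLift_hopf_eq_smul hu
  obtain ⟨d, hd⟩ := exists_hopfLift_hopf_eq_smul hv
  exact ⟨hopf u, hopf v, hopf_mem_sphere hu, hopf_mem_sphere hv,
    prodToCP2_eq_mk_formMul hu hv hc hd⟩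

lemma continuousAt_of_eventually_eq_mk {X : Type*} [TopologicalSpace X] {f : X → CP2}
    {g : X → Fin 3 → ℂ} {x₀ : X} (hg : Continuous g)
    (hfg : ∀ᶠ x in 𝓝 x₀, ∃ h : g x ≠ 0, f x = Quotient.mk projSetoid3 ⟨g x, h⟩) :
    ContinuousAt f x₀ := by
  obtain ⟨U, hU, hUo, hx₀⟩ := mem_nhds_iff.1 hfg
  refine ContinuousOn.continuousAt ?_ (hUo.mem_nhds hx₀)
  have hfU : U.domRestrict f = fun x : U => Quotient.mk projSetoid3 ⟨g x, (hU x.2).1⟩ :=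
    funext fun x => (hU x.2).2
  rw [continuousOn_iff_continuous_domRestrict, hfU]
  exact continuous_quotient_mk'.comp ((hg.comp continuous_subtype_val).subtype_mk _)

lemma continuous_prodToCP2 : Continuous fun x : TwoSphere × TwoSphere => prodToCP2 x.1 x.2 := by
  refine continuous_iff_continuousAt.2 fun x₀ => ?_
  obtain ⟨s, hs, hs₀⟩ := exists_continuous_local_hopfLift x₀.1
  obtain ⟨t, ht, ht₀⟩ := exists_continuous_local_hopfLift x₀.2
  refine continuousAt_of_eventually_eq_mk (g := fun x => formMul (s x.1) (t x.2)) ?_ ?_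
  · exact continuous_formMul.comp ((hs.comp (continuous_subtype_val.comp continuous_fst)).prodMk
      (ht.comp (continuous_subtype_val.comp continuous_snd)))
  · filter_upwards [(continuous_subtype_val.comp continuous_fst).continuousAt.eventually hs₀,
      (continuous_subtype_val.comp continuous_snd).continuousAt.eventually ht₀] with x hsx htx
    obtain ⟨c, hc⟩ := hsx.2 x.1.2
    obtain ⟨d, hd⟩ := htx.2 x.2.2
    exact ⟨formMul_ne_zero hsx.1 htx.1, prodToCP2_eq_mk_formMul hsx.1 htx.1 hc hd⟩

def swapQuotToCP2 : (Quot fun p q : TwoSphere × TwoSphere => q = (p.2, p.1)) → CP2 :=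
  Quot.lift (fun x => prodToCP2 x.1 x.2) fun _ _ h => h ▸ prodToCP2_comm _ _

lemma bijective_swapQuotToCP2 : Function.Bijective swapQuotToCP2 := by
  constructor
  · intro a b
    induction a, b using Quot.induction_on₂ with | h x y => ?_
    intro h
    rcases eq_or_eq_swap_of_prodToCP2_eq x.1.2 x.2.2 y.1.2 y.2.2 h with ⟨h₁, h₂⟩ | ⟨h₁, h₂⟩
    · rw [Prod.ext (Subtype.ext h₁) (Subtype.ext h₂)]
    · exact Quot.sound (Prod.ext (Subtype.ext h₂.symm) (Subtype.ext h₁.symm))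
  · intro z
    obtain ⟨p, q, hp, hq, rfl⟩ := exists_prodToCP2_eq z
    exact ⟨Quot.mk _ (⟨p, hp⟩, ⟨q, hq⟩), rfl⟩

/-- The orbit space of `S² × S²` by the involution `ρ(x, y) = (y, x)` exchanging the two
factors, equipped with the quotient topology, is homeomorphic to the complex projective
plane `ℂP²`. -/
theorem s2_x_s2_quotient_swap_homeomorph_cp2 :
    Nonempty ((Quot fun p q : TwoSphere × TwoSphere => q = (p.2, p.1)) ≃ₜ CP2) :=
  ⟨(continuous_quot_lift _ continuous_prodToCP2).homeoOfEquivCompactToT2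
    (f := Equiv.ofBijective _ bijective_swapQuotToCP2)⟩
end
end
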